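/- Let (X,φ) and (Y,ψ) be irreducible Smale spaces, and let h : X → Y be a homeomorphism that gives rise to an asymptotic continuous orbit equivalence between (X,φ) and (Y,ψ) with cocycle data (c₁, c₂, d₁, d₂). If h is periodic point preserving, then h(φ(x)) = ψ^{c₁(x)}(h(x)) for all x ∈ X. -/

import Mathlib

/-!
Both sides of the equation are continuous in `x`, so it suffices to check it on the periodic
points, which are dense in an irreducible Smale space. For a periodic point `p`, the pair
`(ψ^{c₁(p)}(h p), h(φ p))` lies in `G_ψ^a` and consists of periodic points, since `h` preserves
periodicity; two asymptotic periodic points coincide, as their distance is constant along a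
common period and tends to `0`.

Density is Bowen's closing argument. Irreducibility gives points `u` with `φ^K u` close to `u`
for arbitrarily large `K`. Bracketing repeatedly with `φ^K u` shadows the `K`-periodic
pseudo-orbit of `u` for any finite number of periods, compactness yields a whole orbit
shadowing it, and expansiveness forces that orbit to be `K`-periodic.
-/

open Filter Set Topology

noncomputable section

/-- Integer iterate of a homeomorphism. -/
def hIter {X : Type*} [TopologicalSpace X] (φ : X ≃ₜ X) (n : ℤ) (x : X) : X :=
  ((φ.toEquiv : Equiv.Perm X) ^ n) x

/-- The cocycle sums `f^n` of a function `f : X → ℤ` along the iterates of `φ`: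
`f^n(x) = Σ_{i=0}^{n-1} f(φ^i(x))` for `n > 0`, `f^0 = 0`, and
`f^n(x) = −Σ_{i=n}^{-1} f(φ^i(x))` for `n < 0`. -/
def cSum {X : Type*} [TopologicalSpace X] (φ : X ≃ₜ X) (f : X → ℤ) (n : ℤ) (x : X) : ℤ :=
  if 0 ≤ n then ∑ i ∈ Finset.range n.toNat, f (hIter φ i x)
  else -∑ i ∈ Finset.range (-n).toNat, f (hIter φ (n + i) x)

/-- Stable asymptotic pairs (limit definition). -/
def asympS {X : Type*} [MetricSpace X] (φ : X ≃ₜ X) : Set (X × X) :=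
  {p | Tendsto (fun n : ℕ => dist (hIter φ n p.1) (hIter φ n p.2)) atTop (nhds 0)}

/-- Unstable asymptotic pairs (limit definition). -/
def asympU {X : Type*} [MetricSpace X] (φ : X ≃ₜ X) : Set (X × X) :=
  {p | Tendsto (fun n : ℕ => dist (hIter φ (-(n : ℤ)) p.1) (hIter φ (-(n : ℤ)) p.2))
    atTop (nhds 0)}

/-- Asymptotic pairs (limit definition). -/
def asympA {X : Type*} [MetricSpace X] (φ : X ≃ₜ X) : Set (X × X) := asympS φ ∩ asympU φ

/-- The `ω`-limit set of `x`. -/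
def omegaSet {X : Type*} [MetricSpace X] (φ : X ≃ₜ X) (x : X) : Set X :=
  {z | ∃ n : ℕ → ℕ, StrictMono n ∧ Tendsto (fun i => hIter φ (n i) x) atTop (nhds z)}

/-- The `α`-limit set of `x`. -/
def alphaSet {X : Type*} [MetricSpace X] (φ : X ≃ₜ X) (x : X) : Set X :=
  {z | ∃ n : ℕ → ℤ, StrictAnti n ∧ Tendsto (fun i => hIter φ (n i) x) atTop (nhds z)}

/-- A Smale space structure on a compact metric space `X`. -/
structure SmaleSpace (X : Type*) [MetricSpace X] [CompactSpace X] where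
  phi : X ≃ₜ X
  eps : ℝ
  lam : ℝ
  br : X → X → X
  eps_pos : 0 < eps
  lam_pos : 0 < lam
  lam_lt_one : lam < 1
  br_cont : ContinuousOn (fun p : X × X => br p.1 p.2) {p : X × X | dist p.1 p.2 < eps}
  br_self : ∀ x : X, br x x = x
  br_assoc_left : ∀ x y z : X, dist x y < eps → dist (br x y) z < eps → dist x z < eps →
    br (br x y) z = br x z
  br_assoc_right : ∀ x y z : X, dist y z < eps → dist x (br y z) < eps → dist x z < eps →
    br x (br y z) = br x z
  phi_br : ∀ x y : X, dist x y < eps → dist (phi x) (phi y) < eps →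
    phi (br x y) = br (phi x) (phi y)
  contract_s : ∀ x y z : X, br y x = y → dist x y < eps → br z x = z → dist x z < eps →
    dist (phi y) (phi z) ≤ lam * dist y z
  contract_u : ∀ x y z : X, br x y = y → dist x y < eps → br x z = z → dist x z < eps →
    dist (phi.symm y) (phi.symm z) ≤ lam * dist y z

namespace SmaleSpace

variable {X Y : Type*} [MetricSpace X] [CompactSpace X] [MetricSpace Y] [CompactSpace Y]

/-- Local stable set `X^s(x,ε)`. -/
def Xs (S : SmaleSpace X) (x : X) (ε : ℝ) : Set X := {y | S.br y x = y ∧ dist x y < ε}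

/-- Local unstable set `X^u(x,ε)`. -/
def Xu (S : SmaleSpace X) (x : X) (ε : ℝ) : Set X := {y | S.br x y = y ∧ dist x y < ε}

def Gs0 (S : SmaleSpace X) : Set (X × X) := {p | p.2 ∈ S.Xs p.1 S.eps}

def Gu0 (S : SmaleSpace X) : Set (X × X) := {p | p.2 ∈ S.Xu p.1 S.eps}

/-- `G_φ^{s,n} = (φ×φ)^{-n}(G_φ^{s,0})`. -/
def GsN (S : SmaleSpace X) (n : ℤ) : Set (X × X) :=
  {p | (hIter S.phi n p.1, hIter S.phi n p.2) ∈ S.Gs0}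

/-- `G_φ^{u,n} = (φ×φ)^{n}(G_φ^{u,0})`. -/
def GuN (S : SmaleSpace X) (n : ℤ) : Set (X × X) :=
  {p | (hIter S.phi (-n) p.1, hIter S.phi (-n) p.2) ∈ S.Gu0}

def GaN (S : SmaleSpace X) (n : ℤ) : Set (X × X) := S.GsN n ∩ S.GuN n

/-- The asymptotic equivalence relation `G_φ^a = ⋃_{n ≥ 0} G_φ^{a,n}`. -/
def Ga (S : SmaleSpace X) : Set (X × X) := ⋃ n : ℕ, S.GaN n

lemma gaN_subset_ga (S : SmaleSpace X) (n : ℕ) : S.GaN n ⊆ S.Ga :=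
  Set.subset_iUnion (fun k : ℕ => S.GaN k) n

/-- The inductive limit topology on `G_φ^a`: a set is open iff its intersection with each
`G_φ^{a,n}` is open in the subspace topology from `X × X`. -/
def gaTopology (S : SmaleSpace X) : TopologicalSpace ↥S.Ga :=
  ⨆ n : ℕ, TopologicalSpace.coinduced (Set.inclusion (S.gaN_subset_ga n)) inferInstance

/-- Irreducibility of a Smale space. -/
def Irreducible (S : SmaleSpace X) : Prop :=
  ∀ U V : Set X, IsOpen U → U.Nonempty → IsOpen V → V.Nonempty →
    ∃ K : ℕ, ((hIter S.phi K '' U) ∩ V).Nonempty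

def IsPeriodicPoint (S : SmaleSpace X) (x : X) : Prop :=
  ∃ p : ℕ, 0 < p ∧ hIter S.phi p x = x

/-- `h` is a flip conjugacy between `(X,φ)` and `(Y,ψ)`. -/
def IsFlipConjugacy (S : SmaleSpace X) (T : SmaleSpace Y) (h : X ≃ₜ Y) : Prop :=
  (∀ x, h (S.phi x) = T.phi (h x)) ∨ (∀ x, h (S.phi x) = T.phi.symm (h x))

def FlipConjugate (S : SmaleSpace X) (T : SmaleSpace Y) : Prop :=
  ∃ h : X ≃ₜ Y, IsFlipConjugacy S T h

/-- An isomorphism of the principal étale groupoids `G_φ^a` and `G_ψ^a`: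
a bijection which is a homeomorphism for the inductive limit topologies and preserves
the (equivalence relation) groupoid structure. -/
structure GaIso (S : SmaleSpace X) (T : SmaleSpace Y) where
  toEquiv : ↥S.Ga ≃ ↥T.Ga
  cont : @Continuous _ _ S.gaTopology T.gaTopology toEquiv
  cont_symm : @Continuous _ _ T.gaTopology S.gaTopology toEquiv.symm
  map_mul : ∀ p q r : ↥S.Ga, (p : X × X).2 = (q : X × X).1 →
    (r : X × X) = ((p : X × X).1, (q : X × X).2) →
    (toEquiv p : Y × Y).2 = (toEquiv q : Y × Y).1 ∧
      (toEquiv r : Y × Y) = ((toEquiv p : Y × Y).1, (toEquiv q : Y × Y).2)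

end SmaleSpace

namespace SmaleSpace

variable {X Y : Type*} [MetricSpace X] [CompactSpace X] [MetricSpace Y] [CompactSpace Y]

/-- The data of an asymptotic continuous orbit equivalence between two Smale spaces
`(X,φ)` and `(Y,ψ)`: a homeomorphism `h : X → Y`, continuous functions `c₁ : X → ℤ`,
`c₂ : Y → ℤ` and continuous two-cocycle functions `d₁ : G_φ^a → ℤ`, `d₂ : G_ψ^a → ℤ`
satisfying conditions (1), (2) and (i)–(viii) of the definition of asymptotic continuous
orbit equivalence. -/
structure ACOEData (S : SmaleSpace X) (T : SmaleSpace Y) where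
  h : X ≃ₜ Y
  c₁ : X → ℤ
  c₂ : Y → ℤ
  d₁ : X → X → ℤ
  d₂ : Y → Y → ℤ
  c₁_cont : Continuous c₁
  c₂_cont : Continuous c₂
  d₁_cocycle : ∀ x z w : X, (x, z) ∈ S.Ga → (z, w) ∈ S.Ga → d₁ x z + d₁ z w = d₁ x w
  d₂_cocycle : ∀ y w v : Y, (y, w) ∈ T.Ga → (w, v) ∈ T.Ga → d₂ y w + d₂ w v = d₂ y v
  d₁_cont : @Continuous ↥S.Ga ℤ S.gaTopology _ fun p => d₁ (p : X × X).1 (p : X × X).2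
  d₂_cont : @Continuous ↥T.Ga ℤ T.gaTopology _ fun p => d₂ (p : Y × Y).1 (p : Y × Y).2
  cocycle_eq₁ : ∀ (m : ℤ) (x z : X), (x, z) ∈ S.Ga →
    cSum S.phi c₁ m x + d₁ (hIter S.phi m x) (hIter S.phi m z)
      = cSum S.phi c₁ m z + d₁ x z
  cocycle_eq₂ : ∀ (m : ℤ) (y w : Y), (y, w) ∈ T.Ga →
    cSum T.phi c₂ m y + d₂ (hIter T.phi m y) (hIter T.phi m w)
      = cSum T.phi c₂ m w + d₂ y w
  xi₁_mem : ∀ (n : ℤ) (x : X),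
    (hIter T.phi (cSum S.phi c₁ n x) (h x), h (hIter S.phi n x)) ∈ T.Ga
  xi₁_cont : ∀ n : ℤ, @Continuous X ↥T.Ga _ T.gaTopology
    fun x => ⟨(hIter T.phi (cSum S.phi c₁ n x) (h x), h (hIter S.phi n x)), xi₁_mem n x⟩
  xi₂_mem : ∀ (n : ℤ) (y : Y),
    (hIter S.phi (cSum T.phi c₂ n y) (h.symm y), h.symm (hIter T.phi n y)) ∈ S.Ga
  xi₂_cont : ∀ n : ℤ, @Continuous Y ↥S.Ga _ S.gaTopology
    fun y => ⟨(hIter S.phi (cSum T.phi c₂ n y) (h.symm y), h.symm (hIter T.phi n y)),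
      xi₂_mem n y⟩
  eta₁_mem : ∀ x z : X, (x, z) ∈ S.Ga → (hIter T.phi (d₁ x z) (h x), h z) ∈ T.Ga
  eta₁_cont : @Continuous ↥S.Ga ↥T.Ga S.gaTopology T.gaTopology
    fun p => ⟨(hIter T.phi (d₁ (p : X × X).1 (p : X × X).2) (h (p : X × X).1),
      h (p : X × X).2), eta₁_mem (p : X × X).1 (p : X × X).2 p.2⟩
  eta₂_mem : ∀ y w : Y, (y, w) ∈ T.Ga → (hIter S.phi (d₂ y w) (h.symm y), h.symm w) ∈ S.Ga
  eta₂_cont : @Continuous ↥T.Ga ↥S.Ga T.gaTopology S.gaTopology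
    fun p => ⟨(hIter S.phi (d₂ (p : Y × Y).1 (p : Y × Y).2) (h.symm (p : Y × Y).1),
      h.symm (p : Y × Y).2), eta₂_mem (p : Y × Y).1 (p : Y × Y).2 p.2⟩
  cond_v : ∀ (n : ℤ) (x : X),
    cSum T.phi c₂ (cSum S.phi c₁ n x) (h x)
      + d₂ (hIter T.phi (cSum S.phi c₁ n x) (h x)) (h (hIter S.phi n x)) = n
  cond_vi : ∀ (n : ℤ) (y : Y),
    cSum S.phi c₁ (cSum T.phi c₂ n y) (h.symm y)
      + d₁ (hIter S.phi (cSum T.phi c₂ n y) (h.symm y)) (h.symm (hIter T.phi n y)) = n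
  cond_vii : ∀ x z : X, (x, z) ∈ S.Ga →
    cSum T.phi c₂ (d₁ x z) (h x) + d₂ (hIter T.phi (d₁ x z) (h x)) (h z) = 0
  cond_viii : ∀ y w : Y, (y, w) ∈ T.Ga →
    cSum S.phi c₁ (d₂ y w) (h.symm y) + d₁ (hIter S.phi (d₂ y w) (h.symm y)) (h.symm w) = 0

/-- Asymptotic continuous orbit equivalence of Smale spaces. -/
def ACOE (S : SmaleSpace X) (T : SmaleSpace Y) : Prop := Nonempty (ACOEData S T)

/-- Asymptotic flip conjugacy: asymptotic continuous orbit equivalence in which the cocycle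
data can be chosen as `c₁ ≡ 1, c₂ ≡ 1, d₁ ≡ 0, d₂ ≡ 0` or as
`c₁ ≡ −1, c₂ ≡ −1, d₁ ≡ 0, d₂ ≡ 0`. -/
def AsymptoticallyFlipConjugate (S : SmaleSpace X) (T : SmaleSpace Y) : Prop :=
  ∃ A : ACOEData S T,
    (A.c₁ = (fun _ => 1) ∧ A.c₂ = (fun _ => 1) ∧
      A.d₁ = (fun _ _ => 0) ∧ A.d₂ = (fun _ _ => 0)) ∨
    (A.c₁ = (fun _ => -1) ∧ A.c₂ = (fun _ => -1) ∧
      A.d₁ = (fun _ _ => 0) ∧ A.d₂ = (fun _ _ => 0))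

end SmaleSpace

section hIter

variable {X : Type*} [TopologicalSpace X] (φ : X ≃ₜ X)

lemma hIter_add (m n : ℤ) (x : X) : hIter φ m (hIter φ n x) = hIter φ (m + n) x := by
  simp [hIter, zpow_add]

@[simp]
lemma hIter_zero (x : X) : hIter φ 0 x = x := by simp [hIter]

lemma hIter_one (x : X) : hIter φ 1 x = φ x := by simp [hIter]

lemma hIter_natCast (n : ℕ) (x : X) : hIter φ n x = φ^[n] x := by
  simp only [hIter, zpow_natCast, ← Equiv.Perm.iterate_eq_pow]
  rfl

lemma hIter_symm (n : ℤ) (x : X) : hIter φ.symm n x = hIter φ (-n) x := by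
  simp only [hIter, ← inv_zpow']
  rfl

lemma hIter_add_one (n : ℤ) (x : X) : hIter φ (n + 1) x = φ (hIter φ n x) := by
  rw [add_comm, ← hIter_add, hIter_one]

lemma hIter_sub_one (n : ℤ) (x : X) : hIter φ (n - 1) x = φ.symm (hIter φ n x) := by
  rw [φ.eq_symm_apply, ← hIter_add_one, sub_add_cancel]

lemma continuous_hIter (n : ℤ) : Continuous (hIter φ n) := by
  induction n using Int.induction_on with
  | zero => exact continuous_id.congr fun x => (hIter_zero φ x).symm
  | succ k ih => exact (φ.continuous.comp ih).congr fun x => (hIter_add_one φ k x).symm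
  | pred k ih => exact (φ.symm.continuous.comp ih).congr fun x => (hIter_sub_one φ _ x).symm

lemma continuous_hIter_uncurry : Continuous fun p : ℤ × X => hIter φ p.1 p.2 :=
  continuous_prod_of_discrete_left.2 (continuous_hIter φ)

lemma cSum_one (f : X → ℤ) (x : X) : cSum φ f 1 x = f x := by
  simp [cSum]

end hIter

lemma le_zero_of_forall_le_pow_mul {r C d : ℝ} (h0 : 0 ≤ r) (h1 : r < 1)
    (h : ∀ k : ℕ, d ≤ r ^ k * C) : d ≤ 0 := by
  simpa using ge_of_tendsto' ((tendsto_pow_atTop_nhds_zero_of_lt_one h0 h1).mul_const C) h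

open Function in
lemma eq_of_mem_asympS_of_isPeriodicPt {X : Type*} [MetricSpace X] {φ : X ≃ₜ X} {y w : X}
    {p q : ℕ} (hp : 0 < p) (hq : 0 < q) (hy : IsPeriodicPt φ p y) (hw : IsPeriodicPt φ q w)
    (hyw : (y, w) ∈ asympS φ) : y = w := by
  have hmul : Tendsto (fun m : ℕ => m * (p * q)) atTop atTop :=
    tendsto_id.atTop_mul_const' (Nat.mul_pos hp hq)
  have hconst : ∀ m : ℕ, dist (hIter φ ↑(m * (p * q)) y) (hIter φ ↑(m * (p * q)) w) = dist y w := by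
    intro m
    rw [hIter_natCast, hIter_natCast, ((hy.mul_const q).const_mul m).eq,
      ((hw.const_mul p).const_mul m).eq]
  have hlim := (hyw.comp hmul).congr hconst
  exact dist_eq_zero.1 (tendsto_nhds_unique tendsto_const_nhds hlim)

lemma exists_forall_dist_le_of_forall_natAbs_le {X : Type*} [MetricSpace X] [CompactSpace X]
    {f : ℤ → X → X} (hf : ∀ j, Continuous (f j)) {y : ℤ → X} {B : ℝ}
    (h : ∀ N : ℕ, ∃ z, ∀ j : ℤ, j.natAbs ≤ N → dist (f j z) (y j) ≤ B) :
    ∃ z, ∀ j, dist (f j z) (y j) ≤ B := by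
  set C : ℕ → Set X := fun N => {z | ∀ j : ℤ, j.natAbs ≤ N → dist (f j z) (y j) ≤ B}
  have hC : ∀ N, IsClosed (C N) := fun N => by
    simp only [C, ofPred_forall]
    exact isClosed_iInter fun j => isClosed_iInter fun _ =>
      isClosed_le ((hf j).dist continuous_const) continuous_const
  obtain ⟨z, hz⟩ := IsCompact.nonempty_iInter_of_sequence_nonempty_isCompact_isClosed C
    (fun N z hz j hj => hz j (hj.trans N.le_succ)) h (hC 0).isCompact hC
  exact ⟨z, fun j => mem_iInter.1 hz j.natAbs j le_rfl⟩

namespace SmaleSpace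

variable {X : Type*} [MetricSpace X] [CompactSpace X] (S : SmaleSpace X)

lemma dist_phi_le_of_mem_Xs {p q : X} (hq : q ∈ S.Xs p S.eps) :
    dist (S.phi p) (S.phi q) ≤ S.lam * dist p q :=
  S.contract_s p p q (S.br_self p) (by simpa using S.eps_pos) hq.1 hq.2

lemma phi_mem_Xs {p q : X} (hq : q ∈ S.Xs p S.eps) : S.phi q ∈ S.Xs (S.phi p) S.eps := by
  have hlt : dist (S.phi p) (S.phi q) < S.eps := (S.dist_phi_le_of_mem_Xs hq).trans_lt
    ((mul_le_of_le_one_left dist_nonneg S.lam_lt_one.le).trans_lt hq.2)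
  refine ⟨?_, hlt⟩
  rw [← S.phi_br q p (by rw [dist_comm]; exact hq.2) (by rw [dist_comm]; exact hlt), hq.1]

lemma hIter_mem_Xs {p q : X} (hq : q ∈ S.Xs p S.eps) (k : ℕ) :
    hIter S.phi k q ∈ S.Xs (hIter S.phi k p) S.eps := by
  induction k with
  | zero => simpa using hq
  | succ k ih => simpa only [Nat.cast_succ, hIter_add_one] using S.phi_mem_Xs ih

lemma dist_hIter_le_of_mem_Xs {p q : X} (hq : q ∈ S.Xs p S.eps) (k : ℕ) :
    dist (hIter S.phi k p) (hIter S.phi k q) ≤ S.lam ^ k * dist p q := by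
  induction k with
  | zero => simp
  | succ k ih =>
    rw [Nat.cast_succ, hIter_add_one, hIter_add_one, pow_succ', mul_assoc]
    exact (S.dist_phi_le_of_mem_Xs (S.hIter_mem_Xs hq k)).trans
      (mul_le_mul_of_nonneg_left ih S.lam_pos.le)

lemma gsN_subset_asympS (n : ℕ) : S.GsN n ⊆ asympS S.phi := by
  rintro ⟨y, w⟩ ⟨hbr, hdist⟩
  have hq : hIter S.phi n w ∈ S.Xs (hIter S.phi n y) S.eps := ⟨hbr, hdist⟩
  have hgeom : Tendsto (fun k : ℕ => S.lam ^ k * S.eps) atTop (𝓝 0) := by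
    simpa using (tendsto_pow_atTop_nhds_zero_of_lt_one S.lam_pos.le S.lam_lt_one).mul_const S.eps
  refine (tendsto_add_atTop_iff_nat n).1 (squeeze_zero (fun _ => dist_nonneg) (fun k => ?_) hgeom)
  have := S.dist_hIter_le_of_mem_Xs hq k
  simp only [hIter_add, ← Nat.cast_add] at this
  exact this.trans (mul_le_mul_of_nonneg_left hdist.le (pow_nonneg S.lam_pos.le k))

lemma ga_subset_asympS : S.Ga ⊆ asympS S.phi := fun _ hp =>
  let ⟨n, hn⟩ := mem_iUnion.1 hp
  S.gsN_subset_asympS n hn.1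

lemma IsPeriodicPoint.hIter {S : SmaleSpace X} {x : X} (hx : S.IsPeriodicPoint x) (m : ℤ) :
    S.IsPeriodicPoint (hIter S.phi m x) := by
  obtain ⟨p, hp, hx⟩ := hx
  exact ⟨p, hp, by rw [hIter_add, add_comm, ← hIter_add, hx]⟩

lemma eq_of_mem_ga_of_isPeriodicPoint {y w : X} (hyw : (y, w) ∈ S.Ga)
    (hy : S.IsPeriodicPoint y) (hw : S.IsPeriodicPoint w) : y = w := by
  obtain ⟨p, hp, hy⟩ := hy
  obtain ⟨q, hq, hw⟩ := hw
  rw [hIter_natCast] at hy hw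
  exact eq_of_mem_asympS_of_isPeriodicPt hp hq hy hw (S.ga_subset_asympS hyw)

/-- Time reversal `(X, φ⁻¹)`, with the bracket reversed: it exchanges stable and unstable sets. -/
def symm : SmaleSpace X where
  phi := S.phi.symm
  eps := S.eps
  lam := S.lam
  br x y := S.br y x
  eps_pos := S.eps_pos
  lam_pos := S.lam_pos
  lam_lt_one := S.lam_lt_one
  br_cont := S.br_cont.comp continuous_swap.continuousOn fun p hp => by
    simpa [dist_comm] using hp
  br_self := S.br_self
  br_assoc_left x y z h₁ h₂ h₃ := by
    rw [dist_comm] at h₁ h₂ h₃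
    exact S.br_assoc_right z y x h₁ h₂ h₃
  br_assoc_right x y z h₁ h₂ h₃ := by
    rw [dist_comm] at h₁ h₂ h₃
    exact S.br_assoc_left z y x h₁ h₂ h₃
  phi_br x y h₁ h₂ := by
    rw [S.phi.symm_apply_eq]
    rw [dist_comm] at h₁ h₂
    simpa using (S.phi_br (S.phi.symm y) (S.phi.symm x) h₂ (by simpa using h₁)).symm
  contract_s := S.contract_u
  contract_u := S.contract_s

@[simp]
lemma symm_phi : S.symm.phi = S.phi.symm := rfl

lemma dist_hIter_neg_le_of_mem_Xu {p q : X} (hq : q ∈ S.Xu p S.eps) (k : ℕ) :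
    dist (hIter S.phi (-k) p) (hIter S.phi (-k) q) ≤ S.lam ^ k * dist p q := by
  have := S.symm.dist_hIter_le_of_mem_Xs hq k
  rwa [symm_phi, hIter_symm, hIter_symm] at this

def IsBracketModulus (t γ : ℝ) : Prop :=
  ∀ a b : X, dist a b < t → dist (S.br a b) a < γ ∧ dist (S.br a b) b < γ

lemma IsBracketModulus.symm {S : SmaleSpace X} {t γ : ℝ} (hmod : S.IsBracketModulus t γ) :
    S.symm.IsBracketModulus t γ := fun a b hab =>
  (hmod b a (by rwa [dist_comm])).symm

lemma exists_isBracketModulus {γ : ℝ} (hγ : 0 < γ) :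
    ∃ t, 0 < t ∧ t ≤ S.eps ∧ S.IsBracketModulus t γ := by
  set K : Set (X × X) := {p | dist p.1 p.2 ≤ S.eps / 2}
  have hK : IsCompact K := (isClosed_le (by fun_prop) continuous_const).isCompact
  have hdiag : ∀ c : X, (c, c) ∈ K := fun c => by simpa [K] using (half_pos S.eps_pos).le
  obtain ⟨δ, hδ, hunif⟩ := Metric.uniformContinuousOn_iff.1 (hK.uniformContinuousOn_of_continuous
    (S.br_cont.mono fun p hp => hp.trans_lt (half_lt_self S.eps_pos))) γ hγ
  refine ⟨min δ (S.eps / 2), lt_min hδ (half_pos S.eps_pos),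
    (min_le_right _ _).trans (half_le_self S.eps_pos.le), fun a b hab => ⟨?_, ?_⟩⟩
  all_goals
    have hab' : (a, b) ∈ K := hab.le.trans (min_le_right _ _)
    have hδab : dist a b < δ := hab.trans_le (min_le_left _ _)
  · simpa [S.br_self] using
      hunif (a, b) hab' (a, a) (hdiag a) (by simpa [Prod.dist_eq, dist_comm] using hδab)
  · simpa [S.br_self] using
      hunif (a, b) hab' (b, b) (hdiag b) (by simpa [Prod.dist_eq] using hδab)

/-- The points `[φⁿ z, φⁿ w]` form an orbit stably asymptotic to that of `w`; contracting from time
`-k` to time `0` gives `d(w, [z, w]) ≤ λᵏ γ` for all `k`. -/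
lemma br_eq_right_of_forall_dist_hIter_lt {t γ : ℝ} (ht : t ≤ S.eps) (hγ : γ ≤ S.eps)
    (hmod : S.IsBracketModulus t γ) {z w : X}
    (h : ∀ n : ℤ, dist (hIter S.phi n z) (hIter S.phi n w) < t) : S.br z w = w := by
  set v : ℤ → X := fun n => S.br (hIter S.phi n z) (hIter S.phi n w)
  have hvw : ∀ n, dist (hIter S.phi n w) (v n) < γ := fun n => by
    rw [dist_comm]; exact (hmod _ _ (h n)).2
  have hv_mem : ∀ n, v n ∈ S.Xs (hIter S.phi n w) S.eps := fun n =>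
    ⟨S.br_assoc_left _ _ _ ((h n).trans_le ht) (dist_comm (hIter S.phi n w) (v n) ▸
      (hvw n).trans_le hγ) ((h n).trans_le ht), (hvw n).trans_le hγ⟩
  have hv_iter : ∀ (n : ℤ) (k : ℕ), hIter S.phi k (v n) = v (n + k) := by
    intro n k
    induction k with
    | zero => simp
    | succ k ih =>
      have h₁ := (h (n + k)).trans_le ht
      have h₂ := (h (n + k + 1)).trans_le ht
      rw [hIter_add_one, hIter_add_one] at h₂
      rw [Nat.cast_succ, hIter_add_one, ih, S.phi_br _ _ h₁ h₂, ← hIter_add_one, ← hIter_add_one,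
        add_assoc]
  have hle : ∀ k : ℕ, dist w (v 0) ≤ S.lam ^ k * γ := fun k => by
    have := S.dist_hIter_le_of_mem_Xs (hv_mem (-k)) k
    rw [hv_iter, hIter_add, neg_add_cancel, add_neg_cancel, hIter_zero] at this
    exact this.trans (mul_le_mul_of_nonneg_left (hvw _).le (pow_nonneg S.lam_pos.le k))
  exact (dist_le_zero.1 (le_zero_of_forall_le_pow_mul S.lam_pos.le S.lam_lt_one hle)).symm

lemma eq_of_forall_dist_hIter_lt {t γ : ℝ} (ht : t ≤ S.eps) (hγ : γ ≤ S.eps)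
    (hmod : S.IsBracketModulus t γ) {z w : X}
    (h : ∀ n : ℤ, dist (hIter S.phi n z) (hIter S.phi n w) < t) : z = w := by
  have hw : S.br z w = w := S.br_eq_right_of_forall_dist_hIter_lt ht hγ hmod h
  have hz : S.symm.br w z = z := S.symm.br_eq_right_of_forall_dist_hIter_lt ht hγ hmod.symm
    fun n => by simpa only [symm_phi, hIter_symm, dist_comm] using h (-n)
  exact hz.symm.trans hw

lemma exists_expansive_const :
    ∃ c, 0 < c ∧ ∀ z w : X, (∀ n : ℤ, dist (hIter S.phi n z) (hIter S.phi n w) < c) → z = w :=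
  let ⟨t, ht0, ht, hmod⟩ := S.exists_isBracketModulus S.eps_pos
  ⟨t, ht0, fun _ _ => S.eq_of_forall_dist_hIter_lt ht le_rfl hmod⟩

/-- The witness is `v' = φ^{-K} [φ^K u, v]`: it follows the orbit of `u` for `K` steps, then that
of `v`. -/
lemma exists_closing_step {t γ : ℝ} (ht : t ≤ S.eps) (hγ : γ ≤ S.eps)
    (hmod : S.IsBracketModulus t γ) {u v : X} {K : ℕ} (huv : dist (hIter S.phi K u) v < t) :
    ∃ v' : X, (∀ j ≤ K, dist (hIter S.phi j v') (hIter S.phi j u) ≤ S.lam ^ (K - j) * γ) ∧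
      ∀ i : ℕ, dist (hIter S.phi ↑(K + i) v') (hIter S.phi i v) ≤ S.lam ^ i * γ := by
  set a := hIter S.phi K u
  set w := S.br a v
  have hav : dist a v < S.eps := huv.trans_le ht
  obtain ⟨hwa, hwv⟩ := hmod a v huv
  rw [dist_comm] at hwa hwv
  have hwXu : w ∈ S.Xu a S.eps :=
    ⟨S.br_assoc_right a a v hav (hwa.trans_le hγ) hav, hwa.trans_le hγ⟩
  have hwXs : w ∈ S.Xs v S.eps :=
    ⟨S.br_assoc_left a v v hav (dist_comm v w ▸ hwv.trans_le hγ) hav, hwv.trans_le hγ⟩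
  refine ⟨hIter S.phi (-K) w, fun j hj => ?_, fun i => ?_⟩
  · have hback := S.dist_hIter_neg_le_of_mem_Xu hwXu (K - j)
    have hjK : -((K - j : ℕ) : ℤ) = j + -K := by push_cast [Nat.cast_sub hj]; ring
    rw [hjK, ← hIter_add, hIter_add _ _ (K : ℤ), neg_add_cancel, hIter_zero] at hback
    rw [hIter_add, dist_comm]
    exact hback.trans (mul_le_mul_of_nonneg_left hwa.le (pow_nonneg S.lam_pos.le _))
  · have hfwd := S.dist_hIter_le_of_mem_Xs hwXs i
    rw [hIter_add, Nat.cast_add, add_neg_cancel_comm, dist_comm]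
    exact hfwd.trans (mul_le_mul_of_nonneg_left hwv.le (pow_nonneg S.lam_pos.le _))

/-- Each period of `K` steps added in front leaves an error `λⁱ γ` at `i` steps after it, whence the
geometric sum. -/
lemma exists_shadow_of_dist_hIter_lt {t γ : ℝ} (ht : t ≤ S.eps) (hγ0 : 0 ≤ γ) (hγ : γ ≤ S.eps)
    (hmod : S.IsBracketModulus t γ) {u : X} {K : ℕ} (hK : 0 < K)
    (hret : dist (hIter S.phi K u) u < t / 2) (hlamK : S.lam ^ K * γ < t / 2) (N : ℕ) :
    ∃ v, dist v u ≤ S.lam ^ K * γ ∧ ∀ j ≤ N * K,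
      dist (hIter S.phi j v) (hIter S.phi ↑(j % K) u) ≤
        γ * (1 + ∑ i ∈ Finset.range j, S.lam ^ i) := by
  induction N with
  | zero =>
    refine ⟨u, by simpa using mul_nonneg (pow_nonneg S.lam_pos.le K) hγ0, fun j hj => ?_⟩
    obtain rfl : j = 0 := by simpa using hj
    simpa using hγ0
  | succ N ih =>
    obtain ⟨v, hvu, hv⟩ := ih
    have huv : dist (hIter S.phi K u) v < t := by
      linarith [dist_triangle (hIter S.phi K u) u v, dist_comm u v]
    obtain ⟨v', hhead, htail⟩ := S.exists_closing_step ht hγ hmod huv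
    refine ⟨v', by simpa using hhead 0 K.zero_le, fun j hj => ?_⟩
    rcases lt_or_ge j K with hjK | hjK
    · rw [Nat.mod_eq_of_lt hjK]
      refine (hhead j hjK.le).trans ?_
      have hpow : S.lam ^ (K - j) ≤ 1 := pow_le_one₀ S.lam_pos.le S.lam_lt_one.le
      have hsum : 0 ≤ ∑ i ∈ Finset.range j, S.lam ^ i :=
        Finset.sum_nonneg fun i _ => pow_nonneg S.lam_pos.le i
      nlinarith
    · obtain ⟨i, rfl⟩ := Nat.exists_eq_add_of_le hjK
      have hi : i ≤ N * K := by rw [Nat.succ_mul] at hj; omega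
      calc dist (hIter S.phi ↑(K + i) v') (hIter S.phi ↑((K + i) % K) u)
          ≤ dist (hIter S.phi ↑(K + i) v') (hIter S.phi i v)
            + dist (hIter S.phi i v) (hIter S.phi ↑(i % K) u) := by
            rw [Nat.add_mod_left]; exact dist_triangle _ _ _
        _ ≤ γ * (1 + ∑ k ∈ Finset.range (i + 1), S.lam ^ k) := by
            rw [Finset.sum_range_succ]; linarith [htail i, hv i hi]
        _ ≤ γ * (1 + ∑ k ∈ Finset.range (K + i), S.lam ^ k) := by
            gcongr γ * (1 + ?_)
            exact Finset.sum_le_sum_of_subset_of_nonneg (Finset.range_mono (by omega))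
              fun k _ _ => pow_nonneg S.lam_pos.le k

lemma exists_orbit_shadow_of_dist_hIter_lt {t γ : ℝ} (ht : t ≤ S.eps) (hγ0 : 0 ≤ γ)
    (hγ : γ ≤ S.eps) (hmod : S.IsBracketModulus t γ) {u : X} {K : ℕ} (hK : 0 < K)
    (hret : dist (hIter S.phi K u) u < t / 2) (hlamK : S.lam ^ K * γ < t / 2) :
    ∃ z, ∀ j : ℤ, dist (hIter S.phi j z) (hIter S.phi (j % K) u) ≤ γ * (1 + (1 - S.lam)⁻¹) := by
  refine exists_forall_dist_le_of_forall_natAbs_le (continuous_hIter S.phi) fun N => ?_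
  obtain ⟨v, -, hv⟩ := S.exists_shadow_of_dist_hIter_lt ht hγ0 hγ hmod hK hret hlamK (2 * N)
  refine ⟨hIter S.phi ↑(N * K) v, fun j hj => ?_⟩
  have hNK : j.natAbs ≤ N * K := hj.trans (Nat.le_mul_of_pos_right N hK)
  obtain ⟨J, hJ⟩ : ∃ J : ℕ, j + ↑(N * K) = J := Int.eq_ofNat_of_zero_le (by omega)
  have hJle : J ≤ 2 * N * K := by rw [mul_assoc]; omega
  have hJmod : ((J % K : ℕ) : ℤ) = j % K := by
    rw [Int.natCast_mod, ← hJ, Nat.cast_mul, Int.add_mul_emod_self_right]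
  rw [hIter_add, hJ, ← hJmod]
  refine (hv J hJle).trans (mul_le_mul_of_nonneg_left ?_ hγ0)
  have := geom_sum_Ico_le_of_lt_one (m := 0) (n := J) S.lam_pos.le S.lam_lt_one
  rw [← Finset.range_eq_Ico, pow_zero, one_div] at this
  linarith

lemma exists_hIter_eq_self_of_dist_hIter_lt {t γ c : ℝ} (ht : t ≤ S.eps) (hγ0 : 0 ≤ γ)
    (hγ : γ ≤ S.eps) (hmod : S.IsBracketModulus t γ)
    (hexp : ∀ z w : X, (∀ n : ℤ, dist (hIter S.phi n z) (hIter S.phi n w) < c) → z = w)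
    (hc : 2 * (γ * (1 + (1 - S.lam)⁻¹)) < c) {u : X} {K : ℕ} (hK : 0 < K)
    (hret : dist (hIter S.phi K u) u < t / 2) (hlamK : S.lam ^ K * γ < t / 2) :
    ∃ z, hIter S.phi K z = z ∧ dist z u ≤ γ * (1 + (1 - S.lam)⁻¹) := by
  obtain ⟨z, hz⟩ :=
    S.exists_orbit_shadow_of_dist_hIter_lt ht hγ0 hγ hmod hK hret hlamK
  refine ⟨z, hexp _ _ fun n => ?_, by simpa using hz 0⟩
  have h₁ := hz (n + K)
  rw [Int.add_emod_right] at h₁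
  rw [hIter_add]
  linarith [dist_triangle_right (hIter S.phi (n + K) z) (hIter S.phi n z)
    (hIter S.phi (n % K) u), hz n]

lemma exists_dist_hIter_lt_of_irreducible (hS : S.Irreducible) (x : X) {r : ℝ} (hr : 0 < r)
    (K₀ : ℕ) : ∃ a : X, ∃ K : ℕ, K₀ ≤ K ∧ dist a x < r ∧ dist (hIter S.phi K a) x < r := by
  obtain ⟨K, _, ⟨a, ha, rfl⟩, hKa⟩ := hS (Metric.ball x r) (hIter S.phi K₀ ⁻¹' Metric.ball x r)
    Metric.isOpen_ball ⟨x, Metric.mem_ball_self hr⟩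
    (Metric.isOpen_ball.preimage (continuous_hIter S.phi K₀))
    ⟨hIter S.phi (-K₀) x, by simpa [hIter_add] using hr⟩
  refine ⟨a, K₀ + K, by omega, ha, ?_⟩
  simpa [hIter_add] using hKa

lemma exists_isPeriodicPoint_dist_lt (hS : S.Irreducible) (x : X) {ε : ℝ} (hε : 0 < ε) :
    ∃ p, S.IsPeriodicPoint p ∧ dist p x < ε := by
  obtain ⟨c, hc0, hexp⟩ := S.exists_expansive_const
  set M := 1 + (1 - S.lam)⁻¹
  have hM : 0 < M := by linarith [inv_pos.2 (sub_pos.2 S.lam_lt_one)]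
  set γ := min S.eps (min c ε / (4 * M))
  have hγ0 : 0 < γ := lt_min S.eps_pos (by positivity)
  have hγM : γ * M ≤ min c ε / 4 :=
    calc γ * M ≤ min c ε / (4 * M) * M := mul_le_mul_of_nonneg_right (min_le_right _ _) hM.le
      _ = min c ε / 4 := by field_simp
  obtain ⟨t, ht0, ht, hmod⟩ := S.exists_isBracketModulus hγ0
  obtain ⟨K₀, hK₀⟩ := exists_pow_lt_of_lt_one (div_pos (half_pos ht0) hγ0) S.lam_lt_one
  obtain ⟨a, K, hK, ha, hKa⟩ := S.exists_dist_hIter_lt_of_irreducible hS x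
    (r := min (t / 4) (ε / 2)) (by positivity) (K₀ + 1)
  have hret : dist (hIter S.phi K a) a < t / 2 := by
    linarith [dist_triangle_right (hIter S.phi K a) a x, min_le_left (t / 4) (ε / 2)]
  have hlamK : S.lam ^ K * γ < t / 2 := by
    have := pow_le_pow_of_le_one S.lam_pos.le S.lam_lt_one.le (by omega : K₀ ≤ K)
    rw [lt_div_iff₀ hγ0] at hK₀
    nlinarith
  obtain ⟨z, hz, hza⟩ := S.exists_hIter_eq_self_of_dist_hIter_lt ht hγ0.le (min_le_left _ _)
    hmod hexp (by linarith [min_le_left c ε]) (by omega) hret hlamK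
  exact ⟨z, ⟨K, by omega, hz⟩,
    by linarith [dist_triangle z a x, min_le_right c ε, min_le_right (t / 4) (ε / 2)]⟩

lemma dense_isPeriodicPoint (hS : S.Irreducible) : Dense {x | S.IsPeriodicPoint x} :=
  Metric.dense_iff.2 fun x _ hr =>
    let ⟨p, hp, hpx⟩ := S.exists_isPeriodicPoint_dist_lt hS x hr
    ⟨p, hpx, hp⟩

end SmaleSpace

theorem acoe_periodicPreserving_orbit_equation_general {X Y : Type*} [MetricSpace X]
    [CompactSpace X] [MetricSpace Y] [CompactSpace Y]
    (S : SmaleSpace X) (T : SmaleSpace Y)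
    (hS : S.Irreducible)
    (A : SmaleSpace.ACOEData S T)
    (hpp : ∀ x : X, S.IsPeriodicPoint x → T.IsPeriodicPoint (A.h x)) :
    ∀ x : X, A.h (S.phi x) = hIter T.phi (A.c₁ x) (A.h x) := by
  have hper : EqOn (fun x => A.h (S.phi x)) (fun x => hIter T.phi (A.c₁ x) (A.h x))
      {x | S.IsPeriodicPoint x} := by
    intro p hp
    have hmem := A.xi₁_mem 1 p
    rw [cSum_one, hIter_one] at hmem
    have hφp : S.IsPeriodicPoint (S.phi p) := by simpa only [hIter_one] using hp.hIter 1
    exact (T.eq_of_mem_ga_of_isPeriodicPoint hmem ((hpp p hp).hIter _) (hpp _ hφp)).symm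
  have hcont : Continuous fun x => hIter T.phi (A.c₁ x) (A.h x) :=
    (continuous_hIter_uncurry T.phi).comp (A.c₁_cont.prodMk A.h.continuous)
  exact congrFun (Continuous.ext_on (S.dense_isPeriodicPoint hS)
    (A.h.continuous.comp S.phi.continuous) hcont hper)

/-- If a periodic point preserving homeomorphism `h` gives rise to an
asymptotic continuous orbit equivalence between irreducible Smale spaces, then
`h(φ(x)) = ψ^{c₁(x)}(h(x))` for all `x ∈ X`. -/
theorem acoe_periodicPreserving_orbit_equation {X Y : Type*} [MetricSpace X]
    [CompactSpace X] [MetricSpace Y] [CompactSpace Y]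
    (S : SmaleSpace X) (T : SmaleSpace Y)
    (hS : S.Irreducible) (hT : T.Irreducible)
    (A : SmaleSpace.ACOEData S T)
    (hpp : ∀ x : X, S.IsPeriodicPoint x → T.IsPeriodicPoint (A.h x)) :
    ∀ x : X, A.h (S.phi x) = hIter T.phi (A.c₁ x) (A.h x) :=
  acoe_periodicPreserving_orbit_equation_general S T hS A hpp
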